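/- (Discrete stability of a ResNet-S layer with bias) Let A ∈ ℝ^{d×d} with ‖A‖₂ ≤ √2, b₁, b₂ ∈ ℝ^d, and define x' = ( x − Aᵀ(Ax + b₁)₊ + b₂ )₊. Then ‖x'‖₂ ≤ ‖x‖₂ + √2 ‖(b₁)₊‖₂ + ‖b₂‖₂. -/
import Mathlib
open Matrix RealInnerProductSpace

/-- The Euclidean (ℓ²) norm of a vector in ℝ^d. -/
noncomputable def eucNorm {d : ℕ} (v : Fin d → ℝ) : ℝ := Real.sqrt (∑ i, v i ^ 2)

/-- Component-wise ReLU. -/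
def reluVec {d : ℕ} (v : Fin d → ℝ) : Fin d → ℝ := fun i => max (v i) 0

noncomputable def eVec {d : ℕ} (v : Fin d → ℝ) : EuclideanSpace ℝ (Fin d) :=
  (WithLp.equiv 2 (Fin d → ℝ)).symm v

lemma eucNorm_eq {d : ℕ} (v : Fin d → ℝ) : eucNorm v = ‖eVec v‖ := by
  rw [EuclideanSpace.norm_eq, eucNorm]
  congr 1
  refine Finset.sum_congr rfl fun i _ => ?_
  rw [Real.norm_eq_abs, sq_abs]
  rfl

lemma eVec_add {d : ℕ} (u v : Fin d → ℝ) : eVec (u + v) = eVec u + eVec v := rfl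
lemma eVec_sub {d : ℕ} (u v : Fin d → ℝ) : eVec (u - v) = eVec u - eVec v := rfl

lemma inner_eVec {d : ℕ} (u v : Fin d → ℝ) : ⟪eVec u, eVec v⟫ = u ⬝ᵥ v := by
  simp [eVec, PiLp.inner_apply, dotProduct, mul_comm]

lemma eucNorm_nonneg {d : ℕ} (v : Fin d → ℝ) : 0 ≤ eucNorm v := Real.sqrt_nonneg _

lemma eucNorm_sq {d : ℕ} (v : Fin d → ℝ) : eucNorm v ^ 2 = v ⬝ᵥ v := by
  rw [eucNorm_eq, ← inner_eVec, real_inner_self_eq_norm_sq]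

lemma dot_le {d : ℕ} (u v : Fin d → ℝ) : u ⬝ᵥ v ≤ eucNorm u * eucNorm v := by
  rw [← inner_eVec, eucNorm_eq, eucNorm_eq]
  exact real_inner_le_norm _ _

lemma eucNorm_le_of_sq {d : ℕ} (u v : Fin d → ℝ) (h : eucNorm u ^ 2 ≤ eucNorm v ^ 2) :
    eucNorm u ≤ eucNorm v := by
  nlinarith [eucNorm_nonneg u, eucNorm_nonneg v, h]

lemma transpose_bound {d : ℕ} (A : Matrix (Fin d) (Fin d) ℝ)
    (hA : ∀ v : Fin d → ℝ, eucNorm (A.mulVec v) ≤ Real.sqrt 2 * eucNorm v)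
    (w : Fin d → ℝ) : eucNorm (Aᵀ.mulVec w) ≤ Real.sqrt 2 * eucNorm w := by
  have h1 : eucNorm (Aᵀ.mulVec w) ^ 2 = w ⬝ᵥ A.mulVec (Aᵀ.mulVec w) := by
    rw [eucNorm_sq]
    simp only [mulVec_transpose, dotProduct_mulVec]
  have h2 : w ⬝ᵥ A.mulVec (Aᵀ.mulVec w)
      ≤ eucNorm w * (Real.sqrt 2 * eucNorm (Aᵀ.mulVec w)) :=
    (dot_le w _).trans (by
      have := hA (Aᵀ.mulVec w)
      nlinarith [eucNorm_nonneg w])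
  rcases eq_or_lt_of_le (eucNorm_nonneg (Aᵀ.mulVec w)) with h0 | h0
  · rw [← h0]
    exact mul_nonneg (Real.sqrt_nonneg 2) (eucNorm_nonneg w)
  · nlinarith [h1, h2]

lemma relu_ineq (a c : ℝ) : (max a 0 - max c 0) ^ 2 ≤ (a - c) * (max a 0 - max c 0) := by
  rcases le_total a 0 with ha | ha <;> rcases le_total c 0 with hc | hc <;>
    simp [max_eq_left, max_eq_right, ha, hc] <;> nlinarith

/-- Discrete stability of a ResNet-S layer with bias: if ‖A‖₂ ≤ √2 and
x' = (x − Aᵀ(Ax+b₁)₊ + b₂)₊, then ‖x'‖₂ ≤ ‖x‖₂ + √2‖(b₁)₊‖₂ + ‖b₂‖₂. -/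
theorem resnetS_layer_stable (d : ℕ) (A : Matrix (Fin d) (Fin d) ℝ) (b₁ b₂ : Fin d → ℝ)
    (hA : ∀ v : Fin d → ℝ, eucNorm (A.mulVec v) ≤ Real.sqrt 2 * eucNorm v)
    (x : Fin d → ℝ) :
    eucNorm (reluVec (x - Aᵀ.mulVec (reluVec (A.mulVec x + b₁)) + b₂)) ≤
      eucNorm x + Real.sqrt 2 * eucNorm (reluVec b₁) + eucNorm b₂ := by
  have hrelu : ∀ v : Fin d → ℝ, eucNorm (reluVec v) ≤ eucNorm v := by
    intro v
    apply Real.sqrt_le_sqrt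
    apply Finset.sum_le_sum
    intro i _
    rcases le_total (v i) 0 with h | h <;> simp [reluVec, max_eq_left, max_eq_right, h] <;> nlinarith
  set δ : Fin d → ℝ := reluVec (A.mulVec x + b₁) - reluVec b₁ with hδ
  -- key nonexpansive bound
  have hδsq : δ ⬝ᵥ δ ≤ (A.mulVec x) ⬝ᵥ δ := by
    apply Finset.sum_le_sum
    intro i _
    have := relu_ineq ((A.mulVec x + b₁) i) (b₁ i)
    simp only [hδ, reluVec, Pi.sub_apply, Pi.add_apply] at *
    nlinarith [this]
  have hAt : eucNorm (Aᵀ.mulVec δ) ≤ Real.sqrt 2 * eucNorm δ := transpose_bound A hA δ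
  have hAtsq : (Aᵀ.mulVec δ) ⬝ᵥ (Aᵀ.mulVec δ) ≤ 2 * (δ ⬝ᵥ δ) := by
    have h2 : Real.sqrt 2 ^ 2 = 2 := Real.sq_sqrt (by norm_num)
    nlinarith [eucNorm_sq (Aᵀ.mulVec δ), eucNorm_sq δ, eucNorm_nonneg (Aᵀ.mulVec δ),
      eucNorm_nonneg δ, hAt]
  have hxdot : x ⬝ᵥ (Aᵀ.mulVec δ) = (A.mulVec x) ⬝ᵥ δ := by
    rw [dotProduct_mulVec, vecMul_transpose]
  have key : eucNorm (x - Aᵀ.mulVec δ) ≤ eucNorm x := by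
    apply eucNorm_le_of_sq
    have hexp : eucNorm (x - Aᵀ.mulVec δ) ^ 2
        = x ⬝ᵥ x - 2 * ((A.mulVec x) ⬝ᵥ δ) + (Aᵀ.mulVec δ) ⬝ᵥ (Aᵀ.mulVec δ) := by
      rw [eucNorm_sq]
      simp only [sub_dotProduct, dotProduct_sub, hxdot]
      have h1 : (Aᵀ.mulVec δ) ⬝ᵥ x = (A.mulVec x) ⬝ᵥ δ := by
        rw [dotProduct_comm]; exact hxdot
      rw [h1]
      ring
    rw [hexp, eucNorm_sq]
    nlinarith [hδsq, hAtsq]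
  -- decompose
  have hdecomp : x - Aᵀ.mulVec (reluVec (A.mulVec x + b₁)) + b₂
      = (x - Aᵀ.mulVec δ) + (b₂ - Aᵀ.mulVec (reluVec b₁)) := by
    have : Aᵀ.mulVec δ = Aᵀ.mulVec (reluVec (A.mulVec x + b₁)) - Aᵀ.mulVec (reluVec b₁) := by
      rw [hδ, Matrix.mulVec_sub]
    rw [this]
    abel
  calc eucNorm (reluVec (x - Aᵀ.mulVec (reluVec (A.mulVec x + b₁)) + b₂))
      ≤ eucNorm (x - Aᵀ.mulVec (reluVec (A.mulVec x + b₁)) + b₂) := hrelu _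
    _ = eucNorm ((x - Aᵀ.mulVec δ) + (b₂ - Aᵀ.mulVec (reluVec b₁))) := by rw [hdecomp]
    _ ≤ eucNorm (x - Aᵀ.mulVec δ) + eucNorm (b₂ - Aᵀ.mulVec (reluVec b₁)) := by
        rw [eucNorm_eq, eucNorm_eq, eucNorm_eq, eVec_add]
        exact norm_add_le _ _
    _ ≤ eucNorm x + (eucNorm b₂ + eucNorm (Aᵀ.mulVec (reluVec b₁))) := by
        refine add_le_add key ?_
        rw [eucNorm_eq, eucNorm_eq, eucNorm_eq, eVec_sub]
        exact norm_sub_le _ _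
    _ ≤ eucNorm x + Real.sqrt 2 * eucNorm (reluVec b₁) + eucNorm b₂ := by
        have := transpose_bound A hA (reluVec b₁)
        linarith
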